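/- (The rough punctured code is a valid stabilizer code.) The rough punctured stabilizer matrices commute: (H_X + H_X'') · (H_Z + H_Z'')ᵗ = 0 over F₂. -/

import Mathlib

open Matrix Kronecker

variable {V C : Type*} [Fintype V] [Fintype C] [DecidableEq V] [DecidableEq C]

/-- X-stabilizer matrix `H_X = (1_V ⊗ H | Hᵗ ⊗ 1_C)` of the hypergraph product of `H`
with itself. Rows are indexed by `V × C`, column blocks by `V × V` and `C × C`. -/
def HX (H : Matrix C V (ZMod 2)) : Matrix (V × C) ((V × V) ⊕ (C × C)) (ZMod 2) :=
  Matrix.fromCols ((1 : Matrix V V (ZMod 2)) ⊗ₖ H) (Hᵀ ⊗ₖ (1 : Matrix C C (ZMod 2)))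

/-- Z-stabilizer matrix `H_Z = (H ⊗ 1_V | 1_C ⊗ Hᵗ)`. Rows are indexed by `C × V`. -/
def HZ (H : Matrix C V (ZMod 2)) : Matrix (C × V) ((V × V) ⊕ (C × C)) (ZMod 2) :=
  Matrix.fromCols (H ⊗ₖ (1 : Matrix V V (ZMod 2))) ((1 : Matrix C C (ZMod 2)) ⊗ₖ Hᵀ)

/-- Diagonal 0–1 projector matrix `1_P` onto a subset `P`. -/
def projM {α : Type*} [Fintype α] [DecidableEq α] (P : Finset α) : Matrix α α (ZMod 2) :=
  Matrix.diagonal fun a => if a ∈ P then 1 else 0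

/-- Neighborhood `N = {c ∈ C : ∃ v ∈ S, H c v = 1}` of a set `S` of variable nodes. -/
def Nbhd (H : Matrix C V (ZMod 2)) (S : Finset V) : Finset C :=
  @Finset.filter _ (fun c => ∃ v ∈ S, H c v = 1) (fun _ => inferInstance) Finset.univ

/-- Ancestor `A = {c ∈ C : ∀ v, H c v = 1 → v ∈ S}` of a set `S` of variable nodes. -/
def Anc (H : Matrix C V (ZMod 2)) (S : Finset V) : Finset C :=
  @Finset.filter _ (fun c => ∀ v, H c v = 1 → v ∈ S) (fun _ => inferInstance) Finset.univ

/-- Neighborhood `M = {v ∈ V : ∃ c ∈ T, H c v = 1}` of a set `T` of check nodes. -/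
def NbhdT (H : Matrix C V (ZMod 2)) (T : Finset C) : Finset V :=
  Finset.univ.filter fun v => ∃ c ∈ T, H c v = 1

/-- Ancestor `B = {v ∈ V : ∀ c, H c v = 1 → c ∈ T}` of a set `T` of check nodes. -/
def AncT (H : Matrix C V (ZMod 2)) (T : Finset C) : Finset V :=
  Finset.univ.filter fun v => ∀ c, H c v = 1 → c ∈ T

/-- Smooth-puncture X matrix `H_X' = (1_B ⊗ H_S | H_Tᵗ ⊗ 1_A)`,
where `H_S = H·1_S` and `H_T = 1_T·H`. -/
def HX' (H : Matrix C V (ZMod 2)) (S : Finset V) (T : Finset C) :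
    Matrix (V × C) ((V × V) ⊕ (C × C)) (ZMod 2) :=
  Matrix.fromCols (projM (AncT H T) ⊗ₖ (H * projM S)) ((projM T * H)ᵀ ⊗ₖ projM (Anc H S))

/-- Smooth-puncture Z matrix `H_Z' = (H_T ⊗ 1_S | 1_T ⊗ H_Sᵗ)`. -/
def HZ' (H : Matrix C V (ZMod 2)) (S : Finset V) (T : Finset C) :
    Matrix (C × V) ((V × V) ⊕ (C × C)) (ZMod 2) :=
  Matrix.fromCols ((projM T * H) ⊗ₖ projM S) (projM T ⊗ₖ (H * projM S)ᵀ)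

/-- Rough-puncture X matrix `H_X'' = (1_S ⊗ H_T | H_Sᵗ ⊗ 1_T)`. -/
def HXrough (H : Matrix C V (ZMod 2)) (S : Finset V) (T : Finset C) :
    Matrix (V × C) ((V × V) ⊕ (C × C)) (ZMod 2) :=
  Matrix.fromCols (projM S ⊗ₖ (projM T * H)) ((H * projM S)ᵀ ⊗ₖ projM T)

/-- Rough-puncture Z matrix `H_Z'' = (H_S ⊗ 1_B | 1_A ⊗ H_Tᵗ)`. -/
def HZrough (H : Matrix C V (ZMod 2)) (S : Finset V) (T : Finset C) :
    Matrix (C × V) ((V × V) ⊕ (C × C)) (ZMod 2) :=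
  Matrix.fromCols ((H * projM S) ⊗ₖ projM (AncT H T)) (projM (Anc H S) ⊗ₖ (projM T * H)ᵀ)

/-!
Write `H_X + H_X'' = (X₁ | X₂)` and `H_Z + H_Z'' = (Z₁ | Z₂)` along the qubit blocks `V × V` and
`C × C`. Both `X₁ Z₁ᵀ` and `X₂ Z₂ᵀ` equal `Hᵀ ⊗ H + H_Sᵀ ⊗ H_T`: the remaining cross terms cancel in
pairs because `1_T H 1_B = H 1_B` and `1_S Hᵀ 1_A = Hᵀ 1_A`, i.e. the ancestor `B` of `T` only meets
checks in `T` and the ancestor `A` of `S` only meets bits in `S`. Over `F₂` the two equal block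
products sum to zero.
-/

lemma Matrix.add_self_eq_zero_of_charTwo {m n R : Type*} [Semiring R] [CharP R 2]
    (A : Matrix m n R) : A + A = 0 := by
  ext i j
  exact CharTwo.add_self_eq_zero (A i j)

lemma Matrix.fromCols_add_fromCols {m n₁ n₂ R : Type*} [Add R] (A₁ B₁ : Matrix m n₁ R)
    (A₂ B₂ : Matrix m n₂ R) :
    fromCols A₁ A₂ + fromCols B₁ B₂ = fromCols (A₁ + B₁) (A₂ + B₂) := by
  ext i (j | j) <;> rfl

lemma Matrix.fromCols_mul_transpose_fromCols_eq_zero {l m n₁ n₂ R : Type*} [Fintype n₁]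
    [Fintype n₂] [CommSemiring R] [CharP R 2] (X₁ : Matrix l n₁ R) (X₂ : Matrix l n₂ R)
    (Z₁ : Matrix m n₁ R) (Z₂ : Matrix m n₂ R) (h : X₁ * Z₁ᵀ = X₂ * Z₂ᵀ) :
    fromCols X₁ X₂ * (fromCols Z₁ Z₂)ᵀ = 0 := by
  rw [transpose_fromCols, fromCols_mul_fromRows, h, Matrix.add_self_eq_zero_of_charTwo]

section Projector

variable {α : Type*} [Fintype α] [DecidableEq α]

lemma projM_mul_projM (P : Finset α) : projM P * projM P = projM P := by
  rw [projM, diagonal_mul_diagonal]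
  congr 1
  ext a
  split_ifs <;> simp

lemma projM_transpose (P : Finset α) : (projM P)ᵀ = projM P :=
  diagonal_transpose _

lemma projM_mul_projM_mul {n : Type*} (P : Finset α) (X : Matrix α n (ZMod 2)) :
    projM P * (projM P * X) = projM P * X := by
  rw [← Matrix.mul_assoc, projM_mul_projM]

end Projector

lemma ZMod.two_eq_zero_or_eq_one (x : ZMod 2) : x = 0 ∨ x = 1 := by
  revert x
  decide

lemma projM_mul_mul_projM_ancT (H : Matrix C V (ZMod 2)) (T : Finset C) :
    projM T * (H * projM (AncT H T)) = H * projM (AncT H T) := by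
  ext c v
  simp only [projM, diagonal_mul, mul_diagonal]
  by_cases hv : v ∈ AncT H T
  · have hT : ∀ c, H c v = 1 → c ∈ T := by simpa [AncT] using hv
    rcases ZMod.two_eq_zero_or_eq_one (H c v) with h | h
    · simp [h]
    · simp [hT c h, h]
  · simp [hv]

lemma projM_mul_transpose_mul_projM_anc (H : Matrix C V (ZMod 2)) (S : Finset V) :
    projM S * (Hᵀ * projM (Anc H S)) = Hᵀ * projM (Anc H S) := by
  ext v c
  simp only [projM, diagonal_mul, mul_diagonal, transpose_apply]
  by_cases hc : c ∈ Anc H S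
  · have hS : ∀ v, H c v = 1 → v ∈ S := by simpa [Anc] using hc
    rcases ZMod.two_eq_zero_or_eq_one (H c v) with h | h
    · simp [h]
    · simp [hS v h, h]
  · simp [hc]

section RoughPuncture

variable (H : Matrix C V (ZMod 2)) (S : Finset V) (T : Finset C)

lemma HX_add_HXrough :
    HX H + HXrough H S T = fromCols (1 ⊗ₖ H + projM S ⊗ₖ (projM T * H))
      (Hᵀ ⊗ₖ 1 + (H * projM S)ᵀ ⊗ₖ projM T) :=
  fromCols_add_fromCols _ _ _ _

lemma HZ_add_HZrough :
    HZ H + HZrough H S T = fromCols (H ⊗ₖ 1 + (H * projM S) ⊗ₖ projM (AncT H T))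
      (1 ⊗ₖ Hᵀ + projM (Anc H S) ⊗ₖ (projM T * H)ᵀ) :=
  fromCols_add_fromCols _ _ _ _

lemma blockVV_mul_transpose_eq :
    (1 ⊗ₖ H + projM S ⊗ₖ (projM T * H)) * (H ⊗ₖ 1 + (H * projM S) ⊗ₖ projM (AncT H T))ᵀ =
      Hᵀ ⊗ₖ H + (H * projM S)ᵀ ⊗ₖ (projM T * H) := by
  simp only [transpose_add, ← kroneckerMap_transpose, transpose_one, transpose_mul,
    projM_transpose, Matrix.add_mul, Matrix.mul_add, ← mul_kronecker_mul, Matrix.one_mul,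
    Matrix.mul_one, projM_mul_projM_mul, Matrix.mul_assoc, projM_mul_mul_projM_ancT]
  rw [Matrix.add_self_eq_zero_of_charTwo, add_zero]

lemma blockCC_mul_transpose_eq :
    (Hᵀ ⊗ₖ 1 + (H * projM S)ᵀ ⊗ₖ projM T) * (1 ⊗ₖ Hᵀ + projM (Anc H S) ⊗ₖ (projM T * H)ᵀ)ᵀ =
      Hᵀ ⊗ₖ H + (H * projM S)ᵀ ⊗ₖ (projM T * H) := by
  simp only [transpose_add, ← kroneckerMap_transpose, transpose_one, transpose_mul,
    transpose_transpose, projM_transpose, Matrix.add_mul, Matrix.mul_add, ← mul_kronecker_mul,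
    Matrix.one_mul, Matrix.mul_one, projM_mul_projM_mul, Matrix.mul_assoc,
    projM_mul_transpose_mul_projM_anc]
  rw [Matrix.add_self_eq_zero_of_charTwo, add_zero]

end RoughPuncture

/-- The rough punctured code is a valid stabilizer code:
`(H_X + H_X'') · (H_Z + H_Z'')ᵗ = 0` over `F₂`. -/
theorem stmt_8 (H : Matrix C V (ZMod 2)) (S : Finset V) (T : Finset C) :
    (HX H + HXrough H S T) * (HZ H + HZrough H S T)ᵀ = 0 := by
  rw [HX_add_HXrough, HZ_add_HZrough]
  exact fromCols_mul_transpose_fromCols_eq_zero _ _ _ _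
    ((blockVV_mul_transpose_eq H S T).trans (blockCC_mul_transpose_eq H S T).symm)
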